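/- arXiv:0708.2514 — 4 statements merged into one kernel-verified Lean document; each statement's English description precedes it below -/
import Mathlib

section
/- For a reflexive digraph H, a linear ordering < of V(H) is a Min-Max ordering if and only if for all vertices i, j, k with i < j < k (or k < j < i), ik ∈ A(H) implies ij ∈ A(H) and jk ∈ A(H). -/
/-!
Taking the loop at the middle vertex as one of the two arcs of the Min-Max condition gives the
betweenness property. Conversely, comparing `i` with `s` shows that `is` is an arc: if
`i < s < r` it lies under `ir`, if `s < i < j` it lies under `js`. Reversing the order exchanges
the roles of `is` and `jr`.
-/

/-- `lt` is a Min-Max ordering of the digraph with arc relation `A`. -/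
def IsMinMaxOrdering {V : Type*} (A : V → V → Prop) (lt : V → V → Prop) : Prop :=
  IsStrictTotalOrder V lt ∧
    ∀ i j s r : V, lt i j → lt s r → A i r → A j s → A i s ∧ A j r

/-- The digraph with arc relation `A` admits a Min-Max ordering. -/
def HasMinMaxOrdering {V : Type*} (A : V → V → Prop) : Prop :=
  ∃ lt : V → V → Prop, IsMinMaxOrdering A lt

section

variable {V : Type*} {A : V → V → Prop} {lt : V → V → Prop}

def ArcsSpanBetween (A lt : V → V → Prop) : Prop :=
  ∀ i j k : V, ((lt i j ∧ lt j k) ∨ (lt k j ∧ lt j i)) → A i k → A i j ∧ A j k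

theorem ArcsSpanBetween.swap (h : ArcsSpanBetween A lt) : ArcsSpanBetween A (Function.swap lt) :=
  fun i j k hord => h i j k (hord.imp And.symm And.symm).symm

theorem IsMinMaxOrdering.arcsSpanBetween (hrefl : ∀ v, A v v) (h : IsMinMaxOrdering A lt) :
    ArcsSpanBetween A lt := by
  rintro i j k (⟨hij, hjk⟩ | ⟨hkj, hji⟩) hik
  · exact h.2 i j j k hij hjk hik (hrefl j)
  · exact (h.2 j i k j hji hkj (hrefl j) hik).symm

theorem ArcsSpanBetween.arc_min [Std.Trichotomous lt] (hrefl : ∀ v, A v v)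
    (h : ArcsSpanBetween A lt) {i j s r : V} (hij : lt i j) (hsr : lt s r) (hir : A i r)
    (hjs : A j s) : A i s := by
  rcases trichotomous_of lt i s with his | rfl | hsi
  · exact (h i s r (.inl ⟨his, hsr⟩) hir).1
  · exact hrefl i
  · exact (h j i s (.inr ⟨hsi, hij⟩) hjs).2

theorem ArcsSpanBetween.isMinMaxOrdering (hrefl : ∀ v, A v v) (hlt : IsStrictTotalOrder V lt)
    (h : ArcsSpanBetween A lt) : IsMinMaxOrdering A lt :=
  ⟨hlt, fun _ _ _ _ hij hsr hir hjs =>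
    ⟨h.arc_min hrefl hij hsr hir hjs, h.swap.arc_min hrefl hij hsr hjs hir⟩⟩

end

/-- For a reflexive digraph, a linear ordering is a Min-Max ordering iff for all
$i < j < k$ (or $k < j < i$), $ik ∈ A(H)$ implies $ij, jk ∈ A(H)$. -/
theorem stmt1 {V : Type*} (A : V → V → Prop) (hrefl : ∀ v, A v v)
    (lt : V → V → Prop) (hlt : IsStrictTotalOrder V lt) :
    IsMinMaxOrdering A lt ↔
      ∀ i j k : V, ((lt i j ∧ lt j k) ∨ (lt k j ∧ lt j i)) → A i k → A i j ∧ A j k :=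
  ⟨IsMinMaxOrdering.arcsSpanBetween hrefl, ArcsSpanBetween.isMinMaxOrdering hrefl hlt⟩
end

section
/- The reflexive digraph H_2, with vertices {x1,x2,x3,x4}, all loops, symmetric arcs between x1,x2 and between x2,x3 and between x2,x4, single arcs x1x3 and x4x1, and no other arcs (in particular no arcs between x3,x4 other than possibly loops, no arc x3x1, no arc x1x4), does not admit a Min-Max ordering. -/
/-- The reflexive digraph $H_2$ on $x_1,x_2,x_3,x_4$ (identified with 0,1,2,3):
all loops, symmetric arcs $x_1x_2, x_2x_3, x_2x_4$, single arcs $x_1x_3$ and $x_4x_1$,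
and no other arcs. -/
def H2 : Fin 4 → Fin 4 → Prop := fun a b =>
  a = b ∨ (a, b) ∈
    ({(0,1),(1,0),(1,2),(2,1),(1,3),(3,1),(0,2),(3,0)} : Set (Fin 4 × Fin 4))

theorem IsMinMaxOrdering.false_of_not_arc {V : Type*} {A lt : V → V → Prop}
    (h : IsMinMaxOrdering A lt) {i j s r : V} (hij : lt i j) (hsr : lt s r)
    (hir : A i r) (hjs : A j s) (hnot : ¬ (A i s ∧ A j r)) : False :=
  hnot (h.2 i j s r hij hsr hir hjs)

theorem stmt7 : ¬ HasMinMaxOrdering H2 := by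
  rintro ⟨lt, hlt⟩
  have : IsStrictTotalOrder (Fin 4) lt := hlt.1
  have cmp : ∀ a b : Fin 4, a ≠ b → lt a b ∨ lt b a := fun a b hab =>
    (trichotomous_of lt a b).imp_right (Or.resolve_left · hab)
  rcases cmp 0 2 (by decide) with h02 | h20 <;> rcases cmp 0 3 (by decide) with h03 | h30
  · refine hlt.false_of_not_arc h03 h02 ?_ ?_ ?_ <;> simp [H2]
  · rcases cmp 0 1 (by decide) with h01 | h10
    · refine hlt.false_of_not_arc h01 h30 ?_ ?_ ?_ <;> simp [H2]
    · refine hlt.false_of_not_arc h02 h10 ?_ ?_ ?_ <;> simp [H2]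
  · rcases cmp 0 1 (by decide) with h01 | h10
    · refine hlt.false_of_not_arc h20 h01 ?_ ?_ ?_ <;> simp [H2]
    · refine hlt.false_of_not_arc h10 h03 ?_ ?_ ?_ <;> simp [H2]
  · refine hlt.false_of_not_arc h30 h20 ?_ ?_ ?_ <;> simp [H2]
end

section
/- If a reflexive undirected graph H (viewed as a symmetric digraph) contains an induced 4-cycle C_4, then H has no Min-Max ordering. -/
namespace IsMinMaxOrdering

variable {V : Type*} {E lt : V → V → Prop}

theorem adj_of_lt_of_lt (h : IsMinMaxOrdering E lt) (hE : ∀ x y, E x y → E y x) {x y u : V}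
    (hx : lt u x) (hy : lt u y) (hux : E u x) (huy : E u y) : E x y :=
  hE _ _ (h.2 u y u x hy hx hux (hE _ _ huy)).2

theorem adj_of_gt_of_gt (h : IsMinMaxOrdering E lt) (hE : ∀ x y, E x y → E y x) {x y u : V}
    (hx : lt x u) (hy : lt y u) (hux : E u x) (huy : E u y) : E x y :=
  (h.2 x u y u hx hy (hE _ _ hux) huy).1

theorem between_of_induced_path (h : IsMinMaxOrdering E lt) (hE : ∀ x y, E x y → E y x)
    {x u y : V} (hxu : E x u) (huy : E u y) (hxy : ¬E x y) :
    lt x u ∧ lt u y ∨ lt y u ∧ lt u x := by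
  have : IsStrictTotalOrder V lt := h.1
  have hxu' : x ≠ u := by rintro rfl; exact hxy huy
  have huy' : u ≠ y := by rintro rfl; exact hxy hxu
  obtain hx | hx := (trichotomous_of lt x u).imp_right (·.resolve_left hxu') <;>
    obtain hy | hy := (trichotomous_of lt u y).imp_right (·.resolve_left huy')
  · exact .inl ⟨hx, hy⟩
  · exact absurd (h.adj_of_gt_of_gt hE hx hy (hE _ _ hxu) huy) hxy
  · exact absurd (h.adj_of_lt_of_lt hE hx hy (hE _ _ hxu) huy) hxy
  · exact .inr ⟨hy, hx⟩

end IsMinMaxOrdering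

theorem stmt15_general {V : Type*} (E : V → V → Prop) (hsymm : ∀ x y, E x y → E y x)
    (a b c d : V)
    (hab : E a b) (hbc : E b c) (hcd : E c d) (hda : E d a)
    (hac : ¬ E a c) (hbd : ¬ E b d) :
    ¬ HasMinMaxOrdering E := by
  rintro ⟨lt, hlt⟩
  have : IsStrictTotalOrder V lt := hlt.1
  have ha := hlt.between_of_induced_path hsymm (hsymm _ _ hab) (hsymm _ _ hda) hbd
  have hb := hlt.between_of_induced_path hsymm hab hbc hac
  have hc := hlt.between_of_induced_path hsymm hbc hcd hbd
  obtain ⟨hba, had⟩ | ⟨hda', hab'⟩ := ha <;> obtain ⟨hbc', hcd'⟩ | ⟨hdc, hcb⟩ := hc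
  · obtain ⟨hab', -⟩ | ⟨hcb, -⟩ := hb
    exacts [asymm hba hab', asymm hbc' hcb]
  · exact asymm (trans_of lt hba had) (trans_of lt hdc hcb)
  · exact asymm (trans_of lt hda' hab') (trans_of lt hbc' hcd')
  · obtain ⟨-, hbc'⟩ | ⟨-, hba⟩ := hb
    exacts [asymm hcb hbc', asymm hab' hba]

/-- A reflexive undirected graph containing an induced $C_4$ has no Min-Max ordering. -/
theorem stmt15 {V : Type*} (E : V → V → Prop) (hsymm : ∀ x y, E x y → E y x)
    (hrefl : ∀ x, E x x) (a b c d : V)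
    (hdist : [a, b, c, d].Pairwise (· ≠ ·))
    (hab : E a b) (hbc : E b c) (hcd : E c d) (hda : E d a)
    (hac : ¬ E a c) (hbd : ¬ E b d) :
    ¬ HasMinMaxOrdering E :=
  stmt15_general E hsymm a b c d hab hbc hcd hda hac hbd
end

section
/- If a reflexive undirected graph H contains an induced claw K_{1,3}, then H has no Min-Max ordering. -/
/-- A reflexive undirected graph containing an induced claw $K_{1,3}$ has no
Min-Max ordering. -/
theorem stmt16 {V : Type*} (E : V → V → Prop) (hsymm : ∀ x y, E x y → E y x)
    (hrefl : ∀ x, E x x) (c a b d : V)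
    (hdist : [c, a, b, d].Pairwise (· ≠ ·))
    (hca : E c a) (hcb : E c b) (hcd : E c d)
    (hab : ¬ E a b) (had : ¬ E a d) (hbd : ¬ E b d) :
    ¬ HasMinMaxOrdering E := by
  rintro ⟨lt, hsto, hmm⟩
  haveI : IsStrictTotalOrder V lt := hsto
  -- the center must lie strictly between any two non-adjacent leaves
  have key : ∀ x y : V, lt x y → ¬ E x y → E c x → E c y → lt x c ∧ lt c y := by
    intro x y hxy hnxy hcx hcy
    rcases trichotomous_of lt c x with h1 | h1 | h1
    · exact absurd (hmm c x c y h1 (trans_of lt h1 hxy) hcy (hsymm _ _ hcx)).2 hnxy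
    · exact absurd (h1 ▸ hcy) hnxy
    · rcases trichotomous_of lt c y with h2 | h2 | h2
      · exact ⟨h1, h2⟩
      · exact absurd (hsymm _ _ (h2 ▸ hcx)) hnxy
      · exact absurd (hmm x c y c h1 h2 (hsymm _ _ hcx) hcy).1 hnxy
  have hnba : ¬ E b a := fun h => hab (hsymm _ _ h)
  have hnda : ¬ E d a := fun h => had (hsymm _ _ h)
  have hndb : ¬ E d b := fun h => hbd (hsymm _ _ h)
  have hne : ∀ x y : V, lt x y → ¬ x = y := fun x y h he => irrefl_of lt x (he ▸ h)
  -- get contradiction: c between the middle leaf and both sides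
  have contra : ∀ x y z : V, lt x y → lt y z →
      ¬ E x y → ¬ E y z → E c x → E c y → E c z → False := by
    intro x y z hxy hyz hnxy hnyz hcx hcy hcz
    have h1 := (key x y hxy hnxy hcx hcy).2
    have h2 := (key y z hyz hnyz hcy hcz).1
    exact irrefl_of lt c (trans_of lt h1 h2)
  rcases trichotomous_of lt a b with h1 | h1 | h1
  · rcases trichotomous_of lt b d with h2 | h2 | h2
    · exact contra a b d h1 h2 hab hbd hca hcb hcd
    · exact absurd h2 (by simp_all)
    · rcases trichotomous_of lt a d with h3 | h3 | h3
      · exact contra a d b h3 h2 had hndb hca hcd hcb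
      · exact absurd h3 (by simp_all)
      · exact contra d a b h3 h1 hnda hab hcd hca hcb
  · exact absurd h1 (by simp_all)
  · rcases trichotomous_of lt a d with h2 | h2 | h2
    · exact contra b a d h1 h2 hnba had hcb hca hcd
    · exact absurd h2 (by simp_all)
    · rcases trichotomous_of lt b d with h3 | h3 | h3
      · exact contra b d a h3 h2 hbd hnda hcb hcd hca
      · exact absurd h3 (by simp_all)
      · exact contra d b a h3 h1 hndb hnba hcd hcb hca
end
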